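/- Let P be a naturally labeled finite poset on [n] and m a positive integer. The number of lattice points in the m-th dilate of the enriched chain polytope, |mE_P ∩ ℤ^n|, equals the number of left enriched P-partitions f : P → {0, ±1, ±2, ..., ±m}, i.e., the value Ω_P^{(ℓ)}(m) of the left enriched order polynomial at m. -/

import Mathlib

/-- `A` is an antichain of the poset `(Fin n, r)`. -/
def IsAntichainIn {n : ℕ} (r : Fin n → Fin n → Prop) (A : Set (Fin n)) : Prop :=
  ∀ i ∈ A, ∀ j ∈ A, i ≠ j → ¬ r i j ∧ ¬ r j i

/-- The set `E(P)` of signed indicator vectors of antichains of `P`. -/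
def signedAntichainVectors {n : ℕ} (r : Fin n → Fin n → Prop) : Set (Fin n → ℝ) :=
  {x | (∀ i, x i = 0 ∨ x i = 1 ∨ x i = -1) ∧ IsAntichainIn r {i | x i ≠ 0}}

/-- The enriched chain polytope `E_P`. -/
def enrichedChainPolytope {n : ℕ} (r : Fin n → Fin n → Prop) : Set (Fin n → ℝ) :=
  convexHull ℝ (signedAntichainVectors r)


open Pointwise in
/-- The number of lattice points in the `m`-th dilate of the enriched chain polytope. -/
noncomputable def eCount {n : ℕ} (r : Fin n → Fin n → Prop) (m : ℕ) : ℕ :=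
  Nat.card {x : Fin n → ℤ // (fun i => (x i : ℝ)) ∈ (m : ℝ) • enrichedChainPolytope r}

/-- `f : P → {0,±1,…,±m}` is a left enriched `P`-partition. -/
def IsLeftEnrichedPartition {n : ℕ} (r : Fin n → Fin n → Prop) (m : ℕ)
    (f : Fin n → ℤ) : Prop :=
  (∀ i, |f i| ≤ (m : ℤ)) ∧
  ∀ i j, r i j → i ≠ j → |f i| ≤ |f j| ∧ (|f i| = |f j| → 0 ≤ f j)

/-- The left enriched order polynomial of `P` evaluated at `m`. -/
noncomputable def leCount {n : ℕ} (r : Fin n → Fin n → Prop) (m : ℕ) : ℕ :=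
  Nat.card {f : Fin n → ℤ // IsLeftEnrichedPartition r m f}


/-!
A lattice point `x` lies in `m • E_P` iff `∑_{i ∈ C} |x i| ≤ m` for every chain `C`. Necessity:
a chain meets an antichain at most once, so the inequality holds at the vertices of `E_P`, hence
on their convex hull. Sufficiency: let `F i` be the largest `|x|`-weight of a chain with top `i`.
Then `F i = |x i| + max_{j < i} F j`, so comparable elements have disjoint intervals
`(max_{j < i} F j, F i]`; hence for each `k ≤ m` the elements whose interval contains `k`, signed
as in `x`, form a signed antichain vector, and these `m` layers sum to `x`.

The same recursion makes `x ↦ ±F` (signs taken from `x`) a bijection onto left enriched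
`P`-partitions, with inverse `f ↦ ±(|f i| - max_{j < i} |f j|)`: natural labeling makes `F` the
unique solution of its recursion, and condition (ii) forces `|f i| > max_{j < i} |f j|` whenever
`f i < 0`, so the sign of `f i` survives.
-/

open Finset

section ConvexSum

variable {𝕜 E ι : Type*} [Field 𝕜] [LinearOrder 𝕜] [IsStrictOrderedRing 𝕜] [AddCommGroup E]
  [Module 𝕜 E]

open Pointwise in
theorem Convex.sum_mem_card_smul {s : Set E} (hs : Convex 𝕜 s) (hne : s.Nonempty)
    {t : Finset ι} {v : ι → E} (hv : ∀ k ∈ t, v k ∈ s) : ∑ k ∈ t, v k ∈ (#t : 𝕜) • s := by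
  classical
  induction t using Finset.induction_on with
  | empty => simp [Set.zero_smul_set hne]
  | insert a t ha ih =>
    rw [sum_insert ha, card_insert_of_notMem ha, Nat.cast_succ, add_comm,
      hs.add_smul zero_le_one (Nat.cast_nonneg _)]
    exact Set.add_mem_add (by simpa using hv a (mem_insert_self a t))
      (ih fun k hk => hv k (mem_insert_of_mem hk))

end ConvexSum

theorem convex_setOf_sum_abs_le {ι : Type*} (C : Finset ι) (t : ℝ) :
    Convex ℝ {y : ι → ℝ | ∑ i ∈ C, |y i| ≤ t} := by
  intro y hy z hz a b ha hb hab
  calc ∑ i ∈ C, |a * y i + b * z i|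
      ≤ ∑ i ∈ C, (a * |y i| + b * |z i|) := sum_le_sum fun i _ => by
        simpa [abs_mul, abs_of_nonneg ha, abs_of_nonneg hb] using
          abs_add_le (a * y i) (b * z i)
    _ = a * ∑ i ∈ C, |y i| + b * ∑ i ∈ C, |z i| := by rw [sum_add_distrib, mul_sum, mul_sum]
    _ ≤ a * t + b * t := by gcongr <;> assumption
    _ = t := by rw [← add_mul, hab, one_mul]

section MaxChainSum

variable {n : ℕ} (r : Fin n → Fin n → Prop)

open scoped Classical in
noncomputable def chainsTo (i : Fin n) : Finset (Finset (Fin n)) :=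
  univ.filter fun C => i ∈ C ∧ (∀ j ∈ C, r j i) ∧ IsChain r (C : Set (Fin n))

noncomputable def maxChainSum (w : Fin n → ℕ) (i : Fin n) : ℕ :=
  (chainsTo r i).sup fun C => ∑ j ∈ C, w j

open scoped Classical in
noncomputable def supBelow (g : Fin n → ℕ) (i : Fin n) : ℕ :=
  (univ.filter fun j => r j i ∧ j ≠ i).sup g

variable {r} {i j : Fin n} {C : Finset (Fin n)}

@[simp]
theorem mem_chainsTo :
    C ∈ chainsTo r i ↔ i ∈ C ∧ (∀ j ∈ C, r j i) ∧ IsChain r (C : Set (Fin n)) := by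
  simp [chainsTo]

theorem le_supBelow {g : Fin n → ℕ} (hji : r j i) (hne : j ≠ i) : g j ≤ supBelow r g i :=
  le_sup (by simp [hji, hne])

theorem supBelow_congr {g g' : Fin n → ℕ} (h : ∀ j, r j i → j ≠ i → g j = g' j) :
    supBelow r g i = supBelow r g' i :=
  sup_congr rfl fun j hj => by
    simp only [mem_filter, mem_univ, true_and] at hj
    exact h j hj.1 hj.2

theorem sum_le_maxChainSum (w : Fin n → ℕ) (hC : C ∈ chainsTo r i) :
    ∑ j ∈ C, w j ≤ maxChainSum r w i :=
  le_sup (f := fun C => ∑ j ∈ C, w j) hC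

theorem singleton_mem_chainsTo [Std.Refl r] (i : Fin n) : {i} ∈ chainsTo r i := by
  simp [refl_of r i]

theorem le_maxChainSum [Std.Refl r] (w : Fin n → ℕ) (i : Fin n) :
    w i ≤ maxChainSum r w i := by
  simpa using sum_le_maxChainSum w (singleton_mem_chainsTo (r := r) i)

theorem maxChainSum_add_le [IsPartialOrder (Fin n) r] (w : Fin n → ℕ) (hji : r j i)
    (hne : j ≠ i) :
    maxChainSum r w j + w i ≤ maxChainSum r w i := by
  obtain ⟨C, hC, hCsum⟩ := exists_mem_eq_sup _ ⟨_, singleton_mem_chainsTo (r := r) j⟩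
    fun C => ∑ k ∈ C, w k
  obtain ⟨-, hCj, hCchain⟩ := mem_chainsTo.1 hC
  have hiC : i ∉ C := fun hi => hne (antisymm hji (hCj i hi))
  have hins : insert i C ∈ chainsTo r i := by
    refine mem_chainsTo.2 ⟨mem_insert_self i C, ?_, ?_⟩
    · simp only [mem_insert, forall_eq_or_imp]
      exact ⟨refl_of r i, fun k hk => _root_.trans (hCj k hk) hji⟩
    · rw [coe_insert]
      exact hCchain.insert fun k hk _ => Or.inr (_root_.trans (hCj k hk) hji)
  calc maxChainSum r w j + w i = ∑ k ∈ insert i C, w k := by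
        rw [maxChainSum, hCsum, sum_insert hiC, add_comm]
    _ ≤ maxChainSum r w i := sum_le_maxChainSum w hins

variable (hnat : ∀ i j, r i j → i ≤ j)
include hnat

theorem IsChain.max'_mem_chainsTo [Std.Refl r] (hC : IsChain r (C : Set (Fin n)))
    (hne : C.Nonempty) : C ∈ chainsTo r (C.max' hne) := by
  refine mem_chainsTo.2 ⟨max'_mem C hne, fun k hk => ?_, hC⟩
  by_cases hkt : k = C.max' hne
  · exact hkt ▸ refl_of r k
  · refine (hC hk (max'_mem C hne) hkt).resolve_right fun htk => hkt ?_
    exact le_antisymm (le_max' C k hk) (hnat _ _ htk)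

theorem maxChainSum_eq [IsPartialOrder (Fin n) r] (w : Fin n → ℕ) (i : Fin n) :
    maxChainSum r w i = w i + supBelow r (maxChainSum r w) i := by
  refine le_antisymm (Finset.sup_le fun C hC => ?_) ?_
  · obtain ⟨hiC, hCi, hCchain⟩ := mem_chainsTo.1 hC
    rw [← add_sum_erase C w hiC]
    rcases (C.erase i).eq_empty_or_nonempty with hempty | hne
    · simp [hempty]
    · have htC := max'_mem _ hne
      have hchain : IsChain r ((C.erase i : Finset (Fin n)) : Set (Fin n)) :=
        hCchain.mono (coe_subset.2 (erase_subset i C))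
      gcongr
      calc ∑ k ∈ C.erase i, w k ≤ maxChainSum r w ((C.erase i).max' hne) :=
            sum_le_maxChainSum w (hchain.max'_mem_chainsTo hnat hne)
        _ ≤ supBelow r (maxChainSum r w) i :=
            le_supBelow (hCi _ (mem_of_mem_erase htC)) (ne_of_mem_erase htC)
  · have hbelow : supBelow r (maxChainSum r w) i ≤ maxChainSum r w i - w i :=
      Finset.sup_le fun j hj => by
        simp only [mem_filter, mem_univ, true_and] at hj
        exact le_tsub_of_add_le_right (maxChainSum_add_le w hj.1 hj.2)
    have := le_maxChainSum (r := r) w i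
    omega

theorem eq_maxChainSum_of_eq_add_supBelow [IsPartialOrder (Fin n) r] {F w : Fin n → ℕ}
    (hF : ∀ i, F i = w i + supBelow r F i) : F = maxChainSum r w := by
  funext i
  induction i using WellFoundedLT.induction with
  | _ i ih =>
    rw [hF i, maxChainSum_eq hnat w i]
    congr 1
    exact supBelow_congr fun j hji hne => ih j (lt_of_le_of_ne (hnat j i hji) hne)

end MaxChainSum

section Polytope

variable {n : ℕ} {r : Fin n → Fin n → Prop} {C : Finset (Fin n)}

theorem zero_mem_signedAntichainVectors : 0 ∈ signedAntichainVectors r :=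
  ⟨fun _ => Or.inl rfl, fun _ hi => absurd rfl hi⟩

theorem sum_abs_le_one_of_mem_signedAntichainVectors {v : Fin n → ℝ}
    (hv : v ∈ signedAntichainVectors r) (hC : IsChain r (C : Set (Fin n))) :
    ∑ i ∈ C, |v i| ≤ 1 := by
  obtain ⟨hval, hanti⟩ := hv
  have habs : ∀ i, |v i| = if v i ≠ 0 then 1 else 0 := fun i => by
    rcases hval i with h | h | h <;> simp [h]
  have hcard : #(C.filter fun i => v i ≠ 0) ≤ 1 := by
    refine card_le_one.2 fun a ha b hb => by_contra fun hab => ?_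
    rw [mem_filter] at ha hb
    exact (hC ha.1 hb.1 hab).elim (hanti a ha.2 b hb.2 hab).1 (hanti a ha.2 b hb.2 hab).2
  simp only [habs, sum_boole]
  exact_mod_cast hcard

theorem sum_abs_le_one_of_mem_enrichedChainPolytope {v : Fin n → ℝ}
    (hv : v ∈ enrichedChainPolytope r) (hC : IsChain r (C : Set (Fin n))) :
    ∑ i ∈ C, |v i| ≤ 1 :=
  convexHull_min (fun _ hw => sum_abs_le_one_of_mem_signedAntichainVectors hw hC)
    (convex_setOf_sum_abs_le C 1) hv

open Pointwise in
theorem sum_abs_le_of_mem_smul_enrichedChainPolytope {v : Fin n → ℝ} {t : ℝ} (ht : 0 ≤ t)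
    (hv : v ∈ t • enrichedChainPolytope r) (hC : IsChain r (C : Set (Fin n))) :
    ∑ i ∈ C, |v i| ≤ t := by
  obtain ⟨y, hy, rfl⟩ := hv
  calc ∑ i ∈ C, |t * y i| = t * ∑ i ∈ C, |y i| := by
        simp [abs_mul, abs_of_nonneg ht, mul_sum]
    _ ≤ t := mul_le_of_le_one_right ht (sum_abs_le_one_of_mem_enrichedChainPolytope hy hC)

variable (r) in
noncomputable def layer (x : Fin n → ℤ) (k : ℕ) (i : Fin n) : ℝ :=
  if supBelow r (maxChainSum r fun j => (x j).natAbs) i < k ∧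
      k ≤ maxChainSum r (fun j => (x j).natAbs) i then
    (x i).sign
  else 0

theorem layer_mem_signedAntichainVectors (x : Fin n → ℤ) (k : ℕ) :
    layer r x k ∈ signedAntichainVectors r := by
  refine ⟨fun i => ?_, fun i hi j hj hij => ?_⟩
  · unfold layer
    split_ifs
    · rcases Int.sign_trichotomy (x i) with h | h | h <;> simp [h]
    · exact Or.inl rfl
  · set F := maxChainSum r fun j => (x j).natAbs
    have hmem : ∀ {i}, layer r x k i ≠ 0 → supBelow r F i < k ∧ k ≤ F i :=
      fun h => (ite_ne_right_iff.1 h).1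
    have hi := hmem hi
    have hj := hmem hj
    exact ⟨fun hrij => by have := le_supBelow (g := F) hrij hij; omega,
      fun hrji => by have := le_supBelow (g := F) hrji hij.symm; omega⟩

theorem sum_layer [IsPartialOrder (Fin n) r] (hnat : ∀ i j, r i j → i ≤ j) {x : Fin n → ℤ}
    {m : ℕ} (hx : ∀ i, maxChainSum r (fun j => (x j).natAbs) i ≤ m) :
    ∑ k ∈ Icc 1 m, layer r x k = fun i => (x i : ℝ) := by
  funext i
  set F := maxChainSum r fun j => (x j).natAbs
  have hFi : F i = (x i).natAbs + supBelow r F i := maxChainSum_eq hnat _ i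
  have hIoc : (Icc 1 m).filter (fun k => supBelow r F i < k ∧ k ≤ F i) =
      Ioc (supBelow r F i) (F i) := by
    ext k
    simp only [mem_filter, mem_Icc, mem_Ioc]
    have := hx i
    omega
  rw [Finset.sum_apply]
  simp only [layer]
  rw [← sum_filter, hIoc, sum_const, Nat.card_Ioc, nsmul_eq_mul]
  have hcard : F i - supBelow r F i = (x i).natAbs := by omega
  rw [hcard, Nat.cast_natAbs, ← Int.cast_mul, mul_comm, Int.sign_mul_abs]

open Pointwise in
theorem intCast_mem_smul_enrichedChainPolytope_iff [IsPartialOrder (Fin n) r]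
    (hnat : ∀ i j, r i j → i ≤ j) {x : Fin n → ℤ} {m : ℕ} :
    (fun i => (x i : ℝ)) ∈ (m : ℝ) • enrichedChainPolytope r ↔
      ∀ i, maxChainSum r (fun j => (x j).natAbs) i ≤ m := by
  constructor
  · refine fun hx i => Finset.sup_le fun C hC => ?_
    have := sum_abs_le_of_mem_smul_enrichedChainPolytope (Nat.cast_nonneg m) hx
      (mem_chainsTo.1 hC).2.2
    exact_mod_cast (by push_cast; simpa using this : ((∑ j ∈ C, (x j).natAbs : ℕ) : ℝ) ≤ m)
  · intro hx
    have := (convex_convexHull ℝ (signedAntichainVectors r)).sum_mem_card_smul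
      ⟨0, subset_convexHull ℝ _ zero_mem_signedAntichainVectors⟩
      fun k (_ : k ∈ Icc 1 m) => subset_convexHull ℝ _ (layer_mem_signedAntichainVectors x k)
    rwa [sum_layer hnat hx, Nat.card_Icc, add_tsub_cancel_right] at this

end Polytope

section EnrichedPartition

/-- `a` with the sign of `b`, where `b = 0` counts as positive, as in condition (ii) of a left
enriched `P`-partition. -/
def withSignOf (b : ℤ) (a : ℕ) : ℤ :=
  if 0 ≤ b then a else -a

@[simp]
theorem natAbs_withSignOf (b : ℤ) (a : ℕ) : (withSignOf b a).natAbs = a := by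
  unfold withSignOf
  split_ifs <;> simp

theorem withSignOf_withSignOf_natAbs {c : ℤ} {a : ℕ} (h : c < 0 → a ≠ 0) :
    withSignOf (withSignOf c a) c.natAbs = c := by
  unfold withSignOf
  split_ifs <;> omega

variable {n : ℕ} {r : Fin n → Fin n → Prop} {m : ℕ}

variable (r) in
noncomputable def toEnrichedPartition (x : Fin n → ℤ) (i : Fin n) : ℤ :=
  withSignOf (x i) (maxChainSum r (fun j => (x j).natAbs) i)

variable (r) in
noncomputable def ofEnrichedPartition (f : Fin n → ℤ) (i : Fin n) : ℤ :=
  withSignOf (f i) ((f i).natAbs - supBelow r (fun j => (f j).natAbs) i)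

theorem IsLeftEnrichedPartition.natAbs_le_natAbs {f : Fin n → ℤ}
    (hf : IsLeftEnrichedPartition r m f) {i j : Fin n} (hij : r i j) (hne : i ≠ j) :
    (f i).natAbs ≤ (f j).natAbs := by
  have := (hf.2 i j hij hne).1
  rwa [Int.abs_eq_natAbs, Int.abs_eq_natAbs, Nat.cast_le] at this

theorem IsLeftEnrichedPartition.natAbs_le {f : Fin n → ℤ}
    (hf : IsLeftEnrichedPartition r m f) (i : Fin n) : (f i).natAbs ≤ m := by
  have := hf.1 i
  rwa [Int.abs_eq_natAbs, Nat.cast_le] at this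

theorem IsLeftEnrichedPartition.supBelow_natAbs_le {f : Fin n → ℤ}
    (hf : IsLeftEnrichedPartition r m f) (i : Fin n) :
    supBelow r (fun j => (f j).natAbs) i ≤ (f i).natAbs :=
  Finset.sup_le fun j hj => by
    simp only [mem_filter, mem_univ, true_and] at hj
    exact hf.natAbs_le_natAbs hj.1 hj.2

theorem IsLeftEnrichedPartition.supBelow_natAbs_lt_of_neg {f : Fin n → ℤ}
    (hf : IsLeftEnrichedPartition r m f) {i : Fin n} (hi : f i < 0) :
    supBelow r (fun j => (f j).natAbs) i < (f i).natAbs := by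
  refine (Finset.sup_lt_iff (Int.natAbs_pos.2 hi.ne)).2 fun j hj => ?_
  simp only [mem_filter, mem_univ, true_and] at hj
  refine (hf.natAbs_le_natAbs hj.1 hj.2).lt_of_ne fun heq => ?_
  have := (hf.2 j i hj.1 hj.2).2 (by rw [Int.abs_eq_natAbs, Int.abs_eq_natAbs, heq])
  omega

theorem isLeftEnrichedPartition_toEnrichedPartition [IsPartialOrder (Fin n) r]
    (hnat : ∀ i j, r i j → i ≤ j) {x : Fin n → ℤ}
    (hx : ∀ i, maxChainSum r (fun j => (x j).natAbs) i ≤ m) :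
    IsLeftEnrichedPartition r m (toEnrichedPartition r x) := by
  set F := maxChainSum r fun j => (x j).natAbs
  have habs : ∀ i, |toEnrichedPartition r x i| = F i := fun i => by
    rw [Int.abs_eq_natAbs, toEnrichedPartition, natAbs_withSignOf]
  refine ⟨fun i => by rw [habs]; exact_mod_cast hx i, fun i j hij hne => ?_⟩
  have hFj : F j = (x j).natAbs + supBelow r F j := maxChainSum_eq hnat _ j
  have hFi : F i ≤ supBelow r F j := le_supBelow hij hne
  rw [habs, habs, Nat.cast_le, Nat.cast_inj]
  refine ⟨by omega, fun heq => ?_⟩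
  have hxj : 0 ≤ x j := by omega
  simp only [toEnrichedPartition, withSignOf, if_pos hxj, Nat.cast_nonneg]

theorem maxChainSum_natAbs_ofEnrichedPartition [IsPartialOrder (Fin n) r]
    (hnat : ∀ i j, r i j → i ≤ j) {f : Fin n → ℤ} (hf : IsLeftEnrichedPartition r m f) :
    maxChainSum r (fun i => (ofEnrichedPartition r f i).natAbs) = fun i => (f i).natAbs := by
  refine (eq_maxChainSum_of_eq_add_supBelow hnat fun i => ?_).symm
  have := hf.supBelow_natAbs_le i
  simp only [ofEnrichedPartition, natAbs_withSignOf]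
  omega

theorem ofEnrichedPartition_toEnrichedPartition [IsPartialOrder (Fin n) r]
    (hnat : ∀ i j, r i j → i ≤ j) (x : Fin n → ℤ) :
    ofEnrichedPartition r (toEnrichedPartition r x) = x := by
  funext i
  have hF := maxChainSum_eq hnat (fun j => (x j).natAbs) i
  have hle := le_maxChainSum (r := r) (fun j => (x j).natAbs) i
  simp only [ofEnrichedPartition, toEnrichedPartition, natAbs_withSignOf]
  rw [hF, add_tsub_cancel_right]
  exact withSignOf_withSignOf_natAbs fun _ => by omega

theorem toEnrichedPartition_ofEnrichedPartition [IsPartialOrder (Fin n) r]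
    (hnat : ∀ i j, r i j → i ≤ j) {f : Fin n → ℤ} (hf : IsLeftEnrichedPartition r m f) :
    toEnrichedPartition r (ofEnrichedPartition r f) = f := by
  funext i
  rw [toEnrichedPartition, maxChainSum_natAbs_ofEnrichedPartition hnat hf]
  exact withSignOf_withSignOf_natAbs fun hi => by
    have := hf.supBelow_natAbs_lt_of_neg hi
    omega

variable (r m) in
noncomputable def enrichedPartitionEquiv [IsPartialOrder (Fin n) r]
    (hnat : ∀ i j, r i j → i ≤ j) :
    {x : Fin n → ℤ // ∀ i, maxChainSum r (fun j => (x j).natAbs) i ≤ m} ≃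
      {f : Fin n → ℤ // IsLeftEnrichedPartition r m f} where
  toFun x := ⟨toEnrichedPartition r x.1, isLeftEnrichedPartition_toEnrichedPartition hnat x.2⟩
  invFun f := ⟨ofEnrichedPartition r f.1, by
    rw [maxChainSum_natAbs_ofEnrichedPartition hnat f.2]
    exact f.2.natAbs_le⟩
  left_inv x := Subtype.ext (ofEnrichedPartition_toEnrichedPartition hnat x.1)
  right_inv f := Subtype.ext (toEnrichedPartition_ofEnrichedPartition hnat f.2)

end EnrichedPartition

theorem enrichedChainPolytope_ehrhart_general {n : ℕ} (r : Fin n → Fin n → Prop)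
    (hr : IsPartialOrder (Fin n) r) (hnat : ∀ i j, r i j → i ≤ j)
    (m : ℕ) :
    eCount r m = leCount r m :=
  Nat.card_congr <|
    (Equiv.subtypeEquivRight fun _ => intCast_mem_smul_enrichedChainPolytope_iff hnat).trans
      (enrichedPartitionEquiv r m hnat)

/-- The Ehrhart polynomial of the enriched chain polytope equals the left enriched
order polynomial: `|m E_P ∩ ℤ^n| = Ω_P^{(ℓ)}(m)`. -/
theorem enrichedChainPolytope_ehrhart {n : ℕ} (r : Fin n → Fin n → Prop)
    (hr : IsPartialOrder (Fin n) r) (hnat : ∀ i j, r i j → i ≤ j)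
    (m : ℕ) (hm : 0 < m) :
    eCount r m = leCount r m :=
  enrichedChainPolytope_ehrhart_general r hr hnat m
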